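/- Over a finite signature (finitely many function symbols, each of finite arity, and finitely many constants), the set of terms of depth at most d that are not n-cyclic is finite for every d; moreover, if no term in a set S of terms is n-cyclic and the signature has k function symbols, then every term in S has depth at most n·k. -/

import Mathlib

inductive Term (C F : Type) : Type
  | const : C → Term C F
  | fn : F → List (Term C F) → Term C F

namespace Term

mutual
  def dep {C F : Type} : Term C F → ℕ
    | const _ => 0
    | fn _ ts => 1 + depList ts
  def depList {C F : Type} : List (Term C F) → ℕ
    | [] => 0
    | t :: ts => max (dep t) (depList ts)
end

inductive Subterm {C F : Type} : Term C F → Term C F → Prop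
  | refl (t : Term C F) : Subterm t t
  | fn {t s : Term C F} {f : F} {ts : List (Term C F)} :
      s ∈ ts → Subterm t s → Subterm t (Term.fn f ts)

def ProperSubterm {C F : Type} (s t : Term C F) : Prop :=
  Subterm s t ∧ s ≠ t

def NCyclic {C F : Type} (n : ℕ) (t : Term C F) : Prop :=
  ∃ (f : F) (s : ℕ → List (Term C F)),
    Subterm (Term.fn f (s (n + 1))) t ∧
    ∀ i, 1 ≤ i → i ≤ n → ProperSubterm (Term.fn f (s i)) (Term.fn f (s (i + 1)))

end Term

/-- Well-formed terms: every function symbol is applied to a list matching its arity. -/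
inductive WF {C F : Type} (ar : F → ℕ) : Term C F → Prop
  | const (c : C) : WF ar (Term.const c)
  | fn {f : F} {ts : List (Term C F)} :
      ts.length = ar f → (∀ s ∈ ts, WF ar s) → WF ar (Term.fn f ts)

/-!
A term of depth `D` contains nested function-headed subterms `u 0 ⊑ u 1 ⊑ ⋯ ⊑ u (D - 1)` with
`dep (u i) = i + 1`: follow a deepest argument down from the root. If `D > n * k`, by pigeonhole
`n + 1` of them share their head symbol, and since their depths differ they form an `n`-cyclic chain.

Finiteness holds already without the acyclicity: by induction on `d`, a well-formed term of depth
at most `d + 1` is a constant or a symbol `f` applied to a list of length `ar f` of well-formed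
terms of depth at most `d`.
-/

theorem Set.Finite.lists_length_eq {α : Type*} {s : Set α} (hs : s.Finite) (k : ℕ) :
    {l : List α | l.length = k ∧ ∀ x ∈ l, x ∈ s}.Finite := by
  have : Finite s := hs.to_subtype
  refine ((List.finite_length_eq s k).image (List.map Subtype.val)).subset ?_
  rintro l ⟨hlen, hmem⟩
  lift l to List s using hmem
  exact ⟨l, by simpa using hlen, rfl⟩

namespace Term

variable {C F : Type}

theorem dep_le_depList {u : Term C F} {ts : List (Term C F)} (h : u ∈ ts) :
    dep u ≤ depList ts := by
  induction ts with
  | nil => simp at h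
  | cons a l ih =>
    rcases List.mem_cons.1 h with rfl | h
    · simp [depList]
    · simpa [depList] using Or.inr (ih h)

theorem exists_mem_dep_eq_depList {ts : List (Term C F)} (h : ts ≠ []) :
    ∃ u ∈ ts, dep u = depList ts := by
  induction ts with
  | nil => exact absurd rfl h
  | cons a l ih =>
    rcases eq_or_ne l [] with rfl | hl
    · exact ⟨a, by simp, by simp [depList]⟩
    obtain ⟨u, hu, hdu⟩ := ih hl
    rcases le_total (depList l) (dep a) with hle | hle
    · exact ⟨a, by simp, by simp [depList, hle]⟩
    · exact ⟨u, by simp [hu], by simp [depList, hle, hdu]⟩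

theorem exists_eq_fn_of_dep_ne_zero {t : Term C F} (h : dep t ≠ 0) :
    ∃ f ts, t = fn f ts := by
  cases t with
  | const c => simp [dep] at h
  | fn f ts => exact ⟨f, ts, rfl⟩

theorem exists_subterm_chain (t : Term C F) :
    ∃ u : ℕ → Term C F, (∀ i < dep t, dep (u i) = i + 1) ∧
      (∀ i j, i ≤ j → j < dep t → Subterm (u i) (u j)) ∧ ∀ i < dep t, Subterm (u i) t := by
  induction hD : dep t using Nat.strong_induction_on generalizing t with
  | _ D ih =>
    subst hD
    cases t with
    | const c => exact ⟨fun _ => const c, by simp [dep]⟩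
    | fn f ts =>
      rcases eq_or_ne ts [] with rfl | hts
      · have hdep : dep (fn f ([] : List (Term C F))) = 1 := by simp [dep, depList]
        refine ⟨fun _ => fn f [], fun i hi => ?_, fun _ _ _ _ => .refl _, fun _ _ => .refl _⟩
        rw [hdep] at hi ⊢
        omega
      obtain ⟨c, hc, hdc⟩ := exists_mem_dep_eq_depList hts
      have hdep : dep (fn f ts) = depList ts + 1 := by simp [dep, Nat.add_comm]
      obtain ⟨u, hu_dep, hu_chain, hu_sub⟩ := ih _ (by omega) c hdc
      refine ⟨Function.update u (depList ts) (fn f ts), ?_, ?_, ?_⟩ <;> rw [hdep]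
      · intro i hi
        rcases eq_or_ne i (depList ts) with rfl | hne
        · simp [hdep]
        · simpa [hne] using hu_dep i (by omega)
      · intro i j hij hj
        rcases eq_or_ne j (depList ts) with rfl | hjne
        · rcases eq_or_ne i (depList ts) with rfl | hine
          · simpa using Subterm.refl _
          · simpa [hine] using Subterm.fn hc (hu_sub i (by omega))
        · have hine : i ≠ depList ts := by omega
          simpa [hine, hjne] using hu_chain i j hij (by omega)
      · intro i hi
        rcases eq_or_ne i (depList ts) with rfl | hne
        · simpa using Subterm.refl _
        · simpa [hne] using Subterm.fn hc (hu_sub i (by omega))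

theorem nCyclic_of_chain {n : ℕ} {t : Term C F} {f : F} {s : Fin (n + 1) → List (Term C F)}
    (hlast : Subterm (fn f (s (Fin.last n))) t)
    (hchain : ∀ k : Fin n, ProperSubterm (fn f (s k.castSucc)) (fn f (s k.succ))) :
    NCyclic n t := by
  refine ⟨f, fun i => s ⟨min (i - 1) n, by omega⟩, ?_, fun i hi hin => ?_⟩
  · convert hlast using 4
    simp
  · convert hchain ⟨i - 1, by omega⟩ using 4 <;> simp <;> omega

theorem nCyclic_of_mul_card_lt_dep [Fintype F] {n : ℕ} {t : Term C F}
    (h : n * Fintype.card F < dep t) : NCyclic n t := by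
  classical
  obtain ⟨u, hu_dep, hu_chain, hu_sub⟩ := exists_subterm_chain t
  have hfn : ∀ i : Fin (dep t), ∃ f ts, u i = fn f ts := fun i =>
    exists_eq_fn_of_dep_ne_zero (by simp [hu_dep i i.2])
  choose g s hgs using hfn
  obtain ⟨f, hf⟩ := Fintype.exists_lt_card_fiber_of_mul_lt_card g
    (by simpa [mul_comm] using h)
  obtain ⟨B, hB, hcard⟩ := Finset.exists_subset_card_eq hf
  let idx := B.orderEmbOfFin hcard
  have hu : ∀ k, fn f (s (idx k)) = u (idx k) := fun k => by
    rw [hgs, (Finset.mem_filter.1 (hB (B.orderEmbOfFin_mem hcard k))).2]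
  refine nCyclic_of_chain (f := f) (s := fun k => s (idx k)) ?_ fun k => ?_
  · simpa only [hu] using hu_sub _ (idx _).2
  · have hlt : (idx k.castSucc : ℕ) < idx k.succ := idx.strictMono Fin.castSucc_lt_succ
    simp only [hu]
    refine ⟨hu_chain _ _ hlt.le (idx _).2, fun e => ?_⟩
    have := congrArg dep e
    rw [hu_dep _ (idx _).2, hu_dep _ (idx _).2] at this
    omega

theorem finite_wf_dep_le [Finite C] [Finite F] (ar : F → ℕ) (d : ℕ) :
    {t : Term C F | WF ar t ∧ dep t ≤ d}.Finite := by
  induction d with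
  | zero =>
    refine (Set.finite_range (const : C → Term C F)).subset ?_
    rintro t ⟨hwf, hd⟩
    cases hwf with
    | const c => exact ⟨c, rfl⟩
    | fn => simp [dep] at hd
  | succ d ih =>
    refine ((Set.finite_range (const : C → Term C F)).union
      (Set.finite_iUnion fun f => (ih.lists_length_eq (ar f)).image (fn f))).subset ?_
    rintro t ⟨hwf, hd⟩
    cases hwf with
    | const c => exact Or.inl ⟨c, rfl⟩
    | @fn f ts hlen hwf_ts =>
      have hd' : depList ts ≤ d := by simp only [dep] at hd; omega
      exact Or.inr (Set.mem_iUnion.2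
        ⟨f, ts, ⟨hlen, fun x hx => ⟨hwf_ts x hx, (dep_le_depList hx).trans hd'⟩⟩, rfl⟩)

end Term

theorem finiteness_and_depth_bound {C F : Type} [Fintype C] [Fintype F]
    (ar : F → ℕ) (n : ℕ) (hn : 1 ≤ n) :
    (∀ d : ℕ, {t : Term C F | WF ar t ∧ Term.dep t ≤ d ∧ ¬ Term.NCyclic n t}.Finite) ∧
    (∀ S : Set (Term C F), (∀ t ∈ S, ¬ Term.NCyclic n t) →
      ∀ t ∈ S, Term.dep t ≤ n * Fintype.card F) :=
  ⟨fun d => (Term.finite_wf_dep_le ar d).subset fun _ ht => ⟨ht.1, ht.2.1⟩,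
    fun _ hS t ht => not_lt.1 fun h => hS t ht (Term.nCyclic_of_mul_card_lt_dep h)⟩
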